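/- Nonthermalization theorem (degenerate case): Let Ĥ be a Hamiltonian on H_S ⊗ H_B with spectral projections π_k. For pure initial states ψ₀^{(1)}, ψ₀^{(2)}, define R(ψ₀) = Σ_k ⟨ψ₀|π_k|ψ₀⟩ D(Tr_B(π_k |ψ₀⟩⟨ψ₀| π_k)/⟨ψ₀|π_k|ψ₀⟩, ψ₀^S) (terms with ⟨ψ₀|π_k|ψ₀⟩ = 0 omitted), and let ω^{(i)} = Σ_k π_k |ψ₀^{(i)}⟩⟨ψ₀^{(i)}| π_k with reductions ω^{S(i)} = Tr_B ω^{(i)}. Then D(ω^{S(1)}, ω^{S(2)}) ≥ D(ψ₀^{S(1)}, ψ₀^{S(2)}) − R(ψ₀^{(1)}) − R(ψ₀^{(2)}). -/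

import Mathlib

open Matrix MeasureTheory Filter
open scoped ComplexOrder Kronecker

/-- The matrix square root `PosSemidef.sqrt` as Mathlib (Dec 2024) defined it; it has since been removed. -/
noncomputable def posSemidefSqrt {n : Type*} [Fintype n] [DecidableEq n] {A : Matrix n n ℂ}
    (hA : A.PosSemidef) : Matrix n n ℂ :=
  hA.isHermitian.eigenvectorUnitary.1 * diagonal ((↑) ∘ (√·) ∘ hA.isHermitian.eigenvalues) *
    (star hA.isHermitian.eigenvectorUnitary : Matrix n n ℂ)

noncomputable def traceNorm {n : Type*} [Fintype n] [DecidableEq n] (A : Matrix n n ℂ) : ℝ :=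
  ((posSemidefSqrt (Matrix.posSemidef_conjTranspose_mul_self A)).trace).re

/-- Trace distance `D(ρ,σ) = ‖ρ-σ‖₁/2`. -/
noncomputable def traceDist {n : Type*} [Fintype n] [DecidableEq n] (ρ σ : Matrix n n ℂ) : ℝ :=
  traceNorm (ρ - σ) / 2

/-- A density matrix: positive semidefinite with unit trace. -/
def IsDensity {n : Type*} [Fintype n] [DecidableEq n] (ρ : Matrix n n ℂ) : Prop :=
  ρ.PosSemidef ∧ ρ.trace = 1

/-- Outer product `|v⟩⟨w|`. -/
noncomputable def outer {n : Type*} (v w : n → ℂ) : Matrix n n ℂ := Matrix.vecMulVec v (star w)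

/-- Partial trace over the bath `B`. -/
noncomputable def ptraceB {dS dB : ℕ} (ρ : Matrix (Fin dS × Fin dB) (Fin dS × Fin dB) ℂ) :
    Matrix (Fin dS) (Fin dS) ℂ := Matrix.of fun i j => ∑ b, ρ (i, b) (j, b)

/-!
Write `ρ = |ψ⟩⟨ψ|` and `p_k = ⟨ψ|π_k|ψ⟩`. Since `∑ p_k = 1`, the difference `ω^S - ψ^S` equals
`∑_k (Tr_B(π_k ρ π_k) - p_k ψ^S) = ∑_k p_k (ρ_k^S - ψ^S)` with `ρ_k^S` the normalised reduced
branches, so the triangle inequality for the trace norm gives `D(ω^S, ψ^S) ≤ R(ψ)`; two more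
triangle inequalities then compare `D(ω^{S(1)}, ω^{S(2)})` with `D(ψ^{S(1)}, ψ^{S(2)})`.

The trace-norm triangle inequality for Hermitian matrices rests on `‖C‖₁ ≤ tr X` whenever
`-X ≤ C ≤ X`, which follows by testing against an eigenbasis of `C`; apply it to `C = A + B` and
`X = |A| + |B|`.
-/

open scoped MatrixOrder

section CFCAbs

variable {A : Type*} [NonUnitalRing A] [StarRing A] [TopologicalSpace A] [Module ℝ A]
  [SMulCommClass ℝ A A] [IsScalarTower ℝ A A]
  [NonUnitalContinuousFunctionalCalculus ℝ A IsSelfAdjoint] [PartialOrder A] [StarOrderedRing A]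
  [NonnegSpectrumClass ℝ A] [IsTopologicalRing A] [T2Space A]
  {a : A}

lemma IsSelfAdjoint.le_cfcAbs (ha : IsSelfAdjoint a) : a ≤ CFC.abs a :=
  sub_nonneg.mp <| CFC.abs_sub_self a ▸ nsmul_nonneg (CFC.negPart_nonneg a) 2

lemma IsSelfAdjoint.neg_cfcAbs_le (ha : IsSelfAdjoint a) : -CFC.abs a ≤ a :=
  neg_le_iff_add_nonneg'.mpr <| CFC.abs_add_self a ▸ nsmul_nonneg (CFC.posPart_nonneg a) 2

end CFCAbs

section TraceNorm

variable {n : Type*} [Fintype n] [DecidableEq n]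

lemma posSemidefSqrt_eq_sqrt {A : Matrix n n ℂ} (hA : A.PosSemidef) :
    posSemidefSqrt hA = CFC.sqrt A := by
  rw [CFC.sqrt_eq_cfc, cfc_nnreal_eq_real _ A, hA.1.cfc_eq]
  simp only [IsHermitian.cfc, Unitary.conjStarAlgAut_apply, posSemidefSqrt]
  congr 3
  funext i
  simp [Real.coe_sqrt, Real.coe_toNNReal', hA.eigenvalues_nonneg i]

lemma traceNorm_eq_re_trace_abs (A : Matrix n n ℂ) : traceNorm A = (CFC.abs A).trace.re := by
  rw [traceNorm, posSemidefSqrt_eq_sqrt, CFC.abs, star_eq_conjTranspose]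

@[simp]
lemma traceNorm_neg (A : Matrix n n ℂ) : traceNorm (-A) = traceNorm A := by
  simp [traceNorm_eq_re_trace_abs]

@[simp]
lemma traceNorm_zero : traceNorm (0 : Matrix n n ℂ) = 0 := by
  simp [traceNorm_eq_re_trace_abs]

lemma traceNorm_ofReal_smul {c : ℝ} (hc : 0 ≤ c) (A : Matrix n n ℂ) :
    traceNorm ((c : ℂ) • A) = c * traceNorm A := by
  simp [traceNorm_eq_re_trace_abs, trace_smul, abs_of_nonneg hc]

lemma Matrix.trace_eq_sum_star_dotProduct_mulVec (X : Matrix n n ℂ)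
    (b : OrthonormalBasis n ℂ (EuclideanSpace ℂ n)) :
    X.trace = ∑ i, star ⇑(b i) ⬝ᵥ X *ᵥ ⇑(b i) := by
  have hX : LinearMap.trace ℂ _ (toEuclideanLin X) = X.trace := by
    rw [LinearMap.trace_eq_matrix_trace ℂ (EuclideanSpace.basisFun n ℂ).toBasis]
    congr 1
    ext i j
    simp [LinearMap.toMatrix_apply]
  rw [← hX, LinearMap.trace_eq_sum_inner _ b]
  simp [EuclideanSpace.inner_eq_star_dotProduct, dotProduct_comm]

lemma Matrix.IsHermitian.traceNorm_eq_sum_abs_eigenvalues {A : Matrix n n ℂ}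
    (hA : A.IsHermitian) : traceNorm A = ∑ i, |hA.eigenvalues i| := by
  rw [traceNorm_eq_re_trace_abs, CFC.abs_eq_cfc_norm A, hA.cfc_eq, IsHermitian.cfc,
    Unitary.conjStarAlgAut_apply, trace_mul_cycle, Unitary.coe_star_mul_self, one_mul]
  simp

lemma Matrix.IsHermitian.traceNorm_le_of_neg_le_of_le {A X : Matrix n n ℂ} (hA : A.IsHermitian)
    (hXA : -X ≤ A) (hAX : A ≤ X) : traceNorm A ≤ X.trace.re := by
  rw [hA.traceNorm_eq_sum_abs_eigenvalues,
    X.trace_eq_sum_star_dotProduct_mulVec hA.eigenvectorBasis, Complex.re_sum]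
  gcongr with i
  set u := ⇑(hA.eigenvectorBasis i)
  have h₁ := (le_iff.mp hXA).re_dotProduct_nonneg u
  have h₂ := (le_iff.mp hAX).re_dotProduct_nonneg u
  simp only [sub_neg_eq_add, add_mulVec, sub_mulVec, dotProduct_add, dotProduct_sub,
    RCLike.re_to_complex, Complex.add_re, Complex.sub_re] at h₁ h₂
  rw [hA.eigenvalues_eq i, RCLike.re_to_complex, abs_le]
  constructor <;> linarith

lemma traceNorm_add_le {A B : Matrix n n ℂ} (hA : A.IsHermitian) (hB : B.IsHermitian) :
    traceNorm (A + B) ≤ traceNorm A + traceNorm B := by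
  have h := (hA.add hB).traceNorm_le_of_neg_le_of_le (X := CFC.abs A + CFC.abs B)
    (by
      rw [neg_add]
      exact add_le_add hA.isSelfAdjoint.neg_cfcAbs_le hB.isSelfAdjoint.neg_cfcAbs_le)
    (add_le_add hA.isSelfAdjoint.le_cfcAbs hB.isSelfAdjoint.le_cfcAbs)
  rwa [trace_add, Complex.add_re, ← traceNorm_eq_re_trace_abs, ← traceNorm_eq_re_trace_abs] at h

end TraceNorm

section TraceDist

variable {n : Type*} [Fintype n] [DecidableEq n]

lemma traceNorm_sum_le {ι : Type*} (s : Finset ι) (M : ι → Matrix n n ℂ)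
    (hM : ∀ i ∈ s, (M i).IsHermitian) : traceNorm (∑ i ∈ s, M i) ≤ ∑ i ∈ s, traceNorm (M i) :=
  Finset.le_sum_of_subadditive_on_pred traceNorm IsHermitian traceNorm_zero.le
    (fun _ _ => traceNorm_add_le) (fun _ _ => IsHermitian.add) M hM

lemma traceDist_comm (A B : Matrix n n ℂ) : traceDist A B = traceDist B A := by
  rw [traceDist, traceDist, ← neg_sub, traceNorm_neg]

lemma traceDist_triangle {A B C : Matrix n n ℂ} (hA : A.IsHermitian) (hB : B.IsHermitian)
    (hC : C.IsHermitian) : traceDist A C ≤ traceDist A B + traceDist B C := by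
  have h := traceNorm_add_le (hA.sub hB) (hB.sub hC)
  rw [sub_add_sub_cancel] at h
  rw [traceDist, traceDist, traceDist]
  linarith

lemma traceNorm_sub_smul {p : ℝ} (hp : 0 ≤ p) {M : Matrix n n ℂ} (hM : p = 0 → M = 0)
    (σ : Matrix n n ℂ) : traceNorm (M - (p : ℂ) • σ) = p * traceNorm ((p : ℂ)⁻¹ • M - σ) := by
  rcases hp.eq_or_lt with rfl | hp
  · simp [hM rfl]
  · rw [← traceNorm_ofReal_smul hp.le, smul_sub, smul_inv_smul₀ (by exact_mod_cast hp.ne')]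

lemma traceDist_sum_le {ι : Type*} [Fintype ι] (p : ι → ℝ) (M : ι → Matrix n n ℂ)
    {σ : Matrix n n ℂ} (hσ : σ.IsHermitian) (hM : ∀ i, (M i).IsHermitian) (hp : ∀ i, 0 ≤ p i)
    (hp₁ : ∑ i, p i = 1) (hM₀ : ∀ i, p i = 0 → M i = 0) :
    traceDist (∑ i, M i) σ ≤ ∑ i, p i * traceDist ((p i : ℂ)⁻¹ • M i) σ := by
  have hsplit : ∑ i, M i - σ = ∑ i, (M i - (p i : ℂ) • σ) := by
    rw [Finset.sum_sub_distrib, ← Finset.sum_smul, ← Complex.ofReal_sum, hp₁, Complex.ofReal_one,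
      one_smul]
  have h := traceNorm_sum_le Finset.univ _ fun i _ =>
    (hM i).sub (hσ.smul (Complex.conj_ofReal (p i)))
  simp only [← hsplit, traceNorm_sub_smul (hp _) (hM₀ _)] at h
  simp only [traceDist, mul_div_assoc', ← Finset.sum_div]
  gcongr

end TraceDist

section PartialTrace

variable {dS dB : ℕ}

lemma ptraceB_sum {ι : Type*} (s : Finset ι)
    (ρ : ι → Matrix (Fin dS × Fin dB) (Fin dS × Fin dB) ℂ) :
    ptraceB (∑ i ∈ s, ρ i) = ∑ i ∈ s, ptraceB (ρ i) := by
  ext i j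
  simp only [ptraceB, of_apply, Matrix.sum_apply]
  exact Finset.sum_comm

lemma isHermitian_ptraceB {ρ : Matrix (Fin dS × Fin dB) (Fin dS × Fin dB) ℂ}
    (hρ : ρ.IsHermitian) : (ptraceB ρ).IsHermitian := by
  ext i j
  simp only [conjTranspose_apply, ptraceB, of_apply, star_sum]
  exact Finset.sum_congr rfl fun b _ => by rw [← conjTranspose_apply, hρ.eq]

end PartialTrace

section Projection

variable {N : Type*} [Fintype N] {P : Matrix N N ℂ}

lemma isHermitian_outer_self (v : N → ℂ) : (outer v v).IsHermitian :=
  (posSemidef_vecMulVec_self_star v).isHermitian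

lemma Matrix.IsHermitian.mul_outer_self_mul (hP : P.IsHermitian) (v : N → ℂ) :
    P * outer v v * P = outer (P *ᵥ v) (P *ᵥ v) := by
  rw [outer, outer, mul_vecMulVec, vecMulVec_mul, star_mulVec, hP.eq]

lemma Matrix.IsHermitian.star_dotProduct_mulVec_of_mul_self (hP : P.IsHermitian)
    (hPP : P * P = P) (v : N → ℂ) : star v ⬝ᵥ P *ᵥ v = star (P *ᵥ v) ⬝ᵥ P *ᵥ v := by
  rw [star_mulVec, ← dotProduct_mulVec, mulVec_mulVec, hP.eq, hPP]

lemma Matrix.IsHermitian.isHermitian_mul_outer_self_mul (hP : P.IsHermitian) (v : N → ℂ) :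
    (P * outer v v * P).IsHermitian :=
  hP.mul_outer_self_mul v ▸ isHermitian_outer_self _

end Projection

lemma traceDist_ptraceB_dephase_le {dS dB : ℕ} {ι : Type*} [Fintype ι]
    (π : ι → Matrix (Fin dS × Fin dB) (Fin dS × Fin dB) ℂ) (hherm : ∀ k, (π k).IsHermitian)
    (hidem : ∀ k, π k * π k = π k) (hsum : ∑ k, π k = 1)
    (ψ : Fin dS × Fin dB → ℂ) (hψ : star ψ ⬝ᵥ ψ = 1)
    (p : ι → ℝ) (hp : ∀ k, p k = (star ψ ⬝ᵥ π k *ᵥ ψ).re) :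
    traceDist (ptraceB (∑ k, π k * outer ψ ψ * π k)) (ptraceB (outer ψ ψ)) ≤
      ∑ k, p k *
        traceDist ((p k : ℂ)⁻¹ • ptraceB (π k * outer ψ ψ * π k)) (ptraceB (outer ψ ψ)) := by
  have hp' : ∀ k, p k = (star (π k *ᵥ ψ) ⬝ᵥ π k *ᵥ ψ).re := fun k => by
    rw [hp, (hherm k).star_dotProduct_mulVec_of_mul_self (hidem k)]
  rw [ptraceB_sum]
  refine traceDist_sum_le p _ (isHermitian_ptraceB (isHermitian_outer_self ψ))
    (fun k => isHermitian_ptraceB ((hherm k).isHermitian_mul_outer_self_mul ψ))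
    (fun k => hp' k ▸ (Complex.nonneg_iff.mp (dotProduct_star_self_nonneg _)).1) ?_ fun k hk => ?_
  · simp_rw [hp, ← Complex.re_sum, ← dotProduct_sum, ← sum_mulVec, hsum, one_mulVec, hψ,
      Complex.one_re]
  · have hv : π k *ᵥ ψ = 0 := by
      rw [← dotProduct_star_self_eq_zero]
      exact Complex.ext (hp' k ▸ hk)
        (Complex.nonneg_iff.mp (dotProduct_star_self_nonneg _)).2.symm
    rw [(hherm k).mul_outer_self_mul, hv]
    ext i j
    simp [outer, ptraceB]

theorem nonthermalization_degenerate_general {dS dB m : ℕ}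
    (π : Fin m → Matrix (Fin dS × Fin dB) (Fin dS × Fin dB) ℂ)
    (hherm : ∀ k, (π k).IsHermitian) (hidem : ∀ k, π k * π k = π k)
    (hsum : ∑ k, π k = 1)
    (ψ₁ ψ₂ : Fin dS × Fin dB → ℂ)
    (hψ₁ : star ψ₁ ⬝ᵥ ψ₁ = 1) (hψ₂ : star ψ₂ ⬝ᵥ ψ₂ = 1)
    (ψS₁ ψS₂ : Matrix (Fin dS) (Fin dS) ℂ)
    (hψS₁ : ψS₁ = ptraceB (outer ψ₁ ψ₁)) (hψS₂ : ψS₂ = ptraceB (outer ψ₂ ψ₂))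
    (p₁ p₂ : Fin m → ℝ)
    (hp₁ : ∀ k, p₁ k = (star ψ₁ ⬝ᵥ (π k).mulVec ψ₁).re)
    (hp₂ : ∀ k, p₂ k = (star ψ₂ ⬝ᵥ (π k).mulVec ψ₂).re)
    (R₁ R₂ : ℝ)
    (hR₁ : R₁ = ∑ k, p₁ k *
      traceDist (((p₁ k : ℂ))⁻¹ • ptraceB (π k * outer ψ₁ ψ₁ * π k)) ψS₁)
    (hR₂ : R₂ = ∑ k, p₂ k *
      traceDist (((p₂ k : ℂ))⁻¹ • ptraceB (π k * outer ψ₂ ψ₂ * π k)) ψS₂)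
    (ωS₁ ωS₂ : Matrix (Fin dS) (Fin dS) ℂ)
    (hωS₁ : ωS₁ = ptraceB (∑ k, π k * outer ψ₁ ψ₁ * π k))
    (hωS₂ : ωS₂ = ptraceB (∑ k, π k * outer ψ₂ ψ₂ * π k)) :
    traceDist ωS₁ ωS₂ ≥ traceDist ψS₁ ψS₂ - R₁ - R₂ := by
  subst hψS₁ hψS₂ hR₁ hR₂ hωS₁ hωS₂
  have hψS (ψ : Fin dS × Fin dB → ℂ) : (ptraceB (outer ψ ψ)).IsHermitian :=
    isHermitian_ptraceB (isHermitian_outer_self ψ)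
  have hωS (ψ : Fin dS × Fin dB → ℂ) : (ptraceB (∑ k, π k * outer ψ ψ * π k)).IsHermitian :=
    isHermitian_ptraceB (isSelfAdjoint_sum _ fun k _ => (hherm k).isHermitian_mul_outer_self_mul ψ)
  have h₁ := traceDist_ptraceB_dephase_le π hherm hidem hsum ψ₁ hψ₁ p₁ hp₁
  have h₂ := traceDist_ptraceB_dephase_le π hherm hidem hsum ψ₂ hψ₂ p₂ hp₂
  have t₁ := traceDist_triangle (hψS ψ₁) (hωS ψ₁) (hψS ψ₂)
  have t₂ := traceDist_triangle (hωS ψ₁) (hωS ψ₂) (hψS ψ₂)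
  rw [traceDist_comm] at h₁
  linarith

/-- Nonthermalization theorem (degenerate case): with spectral projections `π_k` of `Ĥ`,
time-averaged states `ω^{(i)} = ∑_k π_k |ψ₀⟩⟨ψ₀| π_k`, and
`R(ψ₀) = ∑_k ⟨ψ₀|π_k|ψ₀⟩ D(Tr_B(π_k|ψ₀⟩⟨ψ₀|π_k)/⟨ψ₀|π_k|ψ₀⟩, ψ₀^S)`
(terms with `⟨ψ₀|π_k|ψ₀⟩ = 0` vanish, as then also the numerator vanishes), one has
`D(ω^{S(1)}, ω^{S(2)}) ≥ D(ψ₀^{S(1)}, ψ₀^{S(2)}) − R(ψ₀^{(1)}) − R(ψ₀^{(2)})`. -/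
theorem nonthermalization_degenerate {dS dB m : ℕ}
    (H : Matrix (Fin dS × Fin dB) (Fin dS × Fin dB) ℂ)
    (π : Fin m → Matrix (Fin dS × Fin dB) (Fin dS × Fin dB) ℂ) (Em : Fin m → ℝ)
    (hEm : Function.Injective Em)
    (hherm : ∀ k, (π k).IsHermitian) (hidem : ∀ k, π k * π k = π k)
    (horth : ∀ k l, k ≠ l → π k * π l = 0) (hsum : ∑ k, π k = 1)
    (hspec : H = ∑ k, (Em k : ℂ) • π k)
    (ψ₁ ψ₂ : Fin dS × Fin dB → ℂ)
    (hψ₁ : star ψ₁ ⬝ᵥ ψ₁ = 1) (hψ₂ : star ψ₂ ⬝ᵥ ψ₂ = 1)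
    (ψS₁ ψS₂ : Matrix (Fin dS) (Fin dS) ℂ)
    (hψS₁ : ψS₁ = ptraceB (outer ψ₁ ψ₁)) (hψS₂ : ψS₂ = ptraceB (outer ψ₂ ψ₂))
    (p₁ p₂ : Fin m → ℝ)
    (hp₁ : ∀ k, p₁ k = (star ψ₁ ⬝ᵥ (π k).mulVec ψ₁).re)
    (hp₂ : ∀ k, p₂ k = (star ψ₂ ⬝ᵥ (π k).mulVec ψ₂).re)
    (R₁ R₂ : ℝ)
    (hR₁ : R₁ = ∑ k, p₁ k *
      traceDist (((p₁ k : ℂ))⁻¹ • ptraceB (π k * outer ψ₁ ψ₁ * π k)) ψS₁)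
    (hR₂ : R₂ = ∑ k, p₂ k *
      traceDist (((p₂ k : ℂ))⁻¹ • ptraceB (π k * outer ψ₂ ψ₂ * π k)) ψS₂)
    (ωS₁ ωS₂ : Matrix (Fin dS) (Fin dS) ℂ)
    (hωS₁ : ωS₁ = ptraceB (∑ k, π k * outer ψ₁ ψ₁ * π k))
    (hωS₂ : ωS₂ = ptraceB (∑ k, π k * outer ψ₂ ψ₂ * π k)) :
    traceDist ωS₁ ωS₂ ≥ traceDist ψS₁ ψS₂ - R₁ - R₂ :=
  nonthermalization_degenerate_general π hherm hidem hsum ψ₁ ψ₂ hψ₁ hψ₂ ψS₁ ψS₂ hψS₁ hψS₂ p₁ p₂ hp₁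
    hp₂ R₁ R₂ hR₁ hR₂ ωS₁ ωS₂ hωS₁ hωS₂
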